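/- Let n ≥ 1 and let R = ℂ[x₁,…,x_n]. Let φ^{(1)},…,φ^{(n)} ∈ Mat_{2×2}(R) be pairwise commuting matrices with φ^{(h)}_{11} = 0 for every h, with φ^{(1)} ≠ 0, and such that for every nonzero φ^{(h)} every common divisor of its four entries is a unit of R. If det φ^{(1)} ≠ 0, then ∑_{h=1}^n I_{φ^{(h)}} is the principal ideal of R[z₁,z₂] generated by the single quadric φ^{(1)}_{21} z₁² + φ^{(1)}_{22} z₁z₂ − φ^{(1)}_{12} z₂², i.e. ∑_{h=1}^n I_{φ^{(h)}} = I_{φ^{(1)}}. -/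

import Mathlib

/-! When both `(0, 0)`-entries vanish, commutation of `A` and `B` says that all `2 × 2`
minors formed from the entries of `A` and `B` vanish. If `A ≠ 0` has coprime entries over a
UFD, this forces `B = r • A`, so the generator of `I_B` is `r` times that of `I_A`. -/

open MvPolynomial

/-- The ideal `I_M` of `R[z₁,z₂]` generated by
`M_{21} z₁² + (M_{22} − M_{11}) z₁z₂ − M_{12} z₂² = ∑ₖ z_k (M_{2k} z₁ − M_{1k} z₂)`. -/
noncomputable def higgsIdeal {R : Type*} [CommRing R]
    (M : Matrix (Fin 2) (Fin 2) R) : Ideal (MvPolynomial (Fin 2) R) :=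
  Ideal.span { p | ∃ i j : Fin 2, i < j ∧
    p = ∑ k : Fin 2, X k * (C (M j k) * X i - C (M i k) * X j) }

theorem Matrix.exists_eq_smul_of_mul_eq_mul {m n R : Type*} [CommMonoidWithZero R]
    [UniqueFactorizationMonoid R] {A B : Matrix m n R} (hA : A ≠ 0)
    (hprim : ∀ g : R, (∀ i j, g ∣ A i j) → IsUnit g)
    (hminor : ∀ i j k l, A i j * B k l = A k l * B i j) : ∃ r : R, B = r • A := by
  obtain ⟨i, j, hij⟩ : ∃ i j, A i j ≠ 0 := by
    by_contra! h
    exact hA (Matrix.ext h)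
  obtain ⟨a, c, g, hac, ha, hc⟩ :=
    UniqueFactorizationMonoid.exists_reduced_factors (A i j) hij (B i j)
  have hg : g ≠ 0 := left_ne_zero_of_mul (ha ▸ hij)
  have ha0 : a ≠ 0 := right_ne_zero_of_mul (ha ▸ hij)
  have hcross : ∀ k l, a * B k l = c * A k l := fun k l =>
    mul_left_cancel₀ hg (by rw [← mul_assoc, ha, hminor, ← hc]; ac_rfl)
  have hunit : IsUnit a :=
    hprim a fun k l => hac.dvd_of_dvd_mul_left ⟨B k l, (hcross k l).symm⟩
  obtain ⟨r, rfl⟩ : a ∣ c := hunit.dvd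
  refine ⟨r, Matrix.ext fun k l => mul_left_cancel₀ ha0 ?_⟩
  rw [hcross, Matrix.smul_apply, smul_eq_mul, mul_assoc]

theorem Matrix.mul_eq_mul_of_commute_of_zero_zero {R : Type*} [CommRing R]
    {A B : Matrix (Fin 2) (Fin 2) R} (hA : A 0 0 = 0) (hB : B 0 0 = 0) (h : Commute A B) :
    ∀ i j k l, A i j * B k l = A k l * B i j := by
  have e := fun i j => congrFun (congrFun h.eq i) j
  simp only [Matrix.mul_apply, Fin.sum_univ_two] at e
  intro i j k l
  fin_cases i <;> fin_cases j <;> fin_cases k <;> fin_cases l <;> simp <;> grind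

section HiggsIdeal

variable {R : Type*} [CommRing R]

noncomputable def higgsQuadric (M : Matrix (Fin 2) (Fin 2) R) : MvPolynomial (Fin 2) R :=
  ∑ k : Fin 2, X k * (C (M 1 k) * X 0 - C (M 0 k) * X 1)

theorem higgsIdeal_eq_span_higgsQuadric (M : Matrix (Fin 2) (Fin 2) R) :
    higgsIdeal M = Ideal.span {higgsQuadric M} := by
  refine congrArg Ideal.span (Set.ext fun p => ⟨?_, ?_⟩)
  · rintro ⟨i, j, hij, rfl⟩
    fin_cases i <;> fin_cases j <;> simp_all [higgsQuadric]
  · rintro rfl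
    exact ⟨0, 1, Fin.zero_lt_one, rfl⟩

theorem higgsQuadric_smul (r : R) (M : Matrix (Fin 2) (Fin 2) R) :
    higgsQuadric (r • M) = C r * higgsQuadric M := by
  simp only [higgsQuadric, Matrix.smul_apply, smul_eq_mul, map_mul, Fin.sum_univ_two]
  ring

theorem higgsQuadric_of_zero_zero {M : Matrix (Fin 2) (Fin 2) R} (hM : M 0 0 = 0) :
    higgsQuadric M = C (M 1 0) * X 0 ^ 2 + C (M 1 1) * X 0 * X 1 - C (M 0 1) * X 1 ^ 2 := by
  simp only [higgsQuadric, Fin.sum_univ_two, hM, map_zero]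
  ring

theorem higgsIdeal_smul_le (r : R) (M : Matrix (Fin 2) (Fin 2) R) :
    higgsIdeal (r • M) ≤ higgsIdeal M := by
  rw [higgsIdeal_eq_span_higgsQuadric, higgsIdeal_eq_span_higgsQuadric,
    Ideal.span_singleton_le_span_singleton, higgsQuadric_smul]
  exact dvd_mul_left _ _

theorem sum_higgsIdeal_eq_of_commute [UniqueFactorizationMonoid R] {ι : Type*} [Fintype ι]
    (φ : ι → Matrix (Fin 2) (Fin 2) R) (i₀ : ι) (hφ : φ i₀ ≠ 0)
    (hprim : ∀ g : R, (∀ i j, g ∣ φ i₀ i j) → IsUnit g)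
    (hcomm : ∀ h, Commute (φ i₀) (φ h)) (h00 : ∀ h, φ h 0 0 = 0) :
    ∑ h, higgsIdeal (φ h) = higgsIdeal (φ i₀) := by
  have hle : ∀ h, higgsIdeal (φ h) ≤ higgsIdeal (φ i₀) := fun h => by
    obtain ⟨r, hr⟩ := Matrix.exists_eq_smul_of_mul_eq_mul hφ hprim
      (Matrix.mul_eq_mul_of_commute_of_zero_zero (h00 i₀) (h00 h) (hcomm h))
    exact hr ▸ higgsIdeal_smul_le r (φ i₀)
  refine le_antisymm ?_ <| Finset.single_le_sum (f := fun h => higgsIdeal (φ h))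
    (fun _ _ => zero_le) (Finset.mem_univ i₀)
  exact Finset.sum_induction _ (· ≤ higgsIdeal (φ i₀)) (fun _ _ => sup_le) bot_le
    fun h _ => hle h

end HiggsIdeal

theorem stmt12_general (n : ℕ) (hn : 1 ≤ n)
    (φ : Fin n → Matrix (Fin 2) (Fin 2) (MvPolynomial (Fin n) ℂ))
    (hcomm : ∀ h h', Commute (φ h) (φ h'))
    (h11 : ∀ h, φ h 0 0 = 0)
    (hφ1 : φ ⟨0, hn⟩ ≠ 0)
    (hgcd : ∀ h, φ h ≠ 0 → ∀ g : MvPolynomial (Fin n) ℂ,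
      (∀ i j : Fin 2, g ∣ φ h i j) → IsUnit g) :
    (∑ h, higgsIdeal (φ h)) =
      Ideal.span {C (φ ⟨0, hn⟩ 1 0) * X 0 ^ 2 + C (φ ⟨0, hn⟩ 1 1) * X 0 * X 1
        - C (φ ⟨0, hn⟩ 0 1) * X 1 ^ 2} ∧
    (∑ h, higgsIdeal (φ h)) = higgsIdeal (φ ⟨0, hn⟩) := by
  have hsum := sum_higgsIdeal_eq_of_commute φ ⟨0, hn⟩ hφ1 (hgcd _ hφ1)
    (hcomm ⟨0, hn⟩) h11
  refine ⟨?_, hsum⟩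
  rw [hsum, higgsIdeal_eq_span_higgsQuadric, higgsQuadric_of_zero_zero (h11 _)]

/-- Proposition 5.2, case `det φ⁽¹⁾ ≠ 0`: for pairwise commuting `2×2` Higgs-field
matrices over `ℂ[x₁,…,x_n]` with vanishing `(1,1)`-entries, primitive entries, and
`φ⁽¹⁾ ≠ 0` with `det φ⁽¹⁾ ≠ 0`, the ideal `∑ₕ I_{φ⁽ʰ⁾}` is principal, generated by
`φ⁽¹⁾₂₁ z₁² + φ⁽¹⁾₂₂ z₁z₂ − φ⁽¹⁾₁₂ z₂²`; i.e. it equals `I_{φ⁽¹⁾}`. -/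
theorem stmt12 (n : ℕ) (hn : 1 ≤ n)
    (φ : Fin n → Matrix (Fin 2) (Fin 2) (MvPolynomial (Fin n) ℂ))
    (hcomm : ∀ h h', Commute (φ h) (φ h'))
    (h11 : ∀ h, φ h 0 0 = 0)
    (hφ1 : φ ⟨0, hn⟩ ≠ 0)
    (hgcd : ∀ h, φ h ≠ 0 → ∀ g : MvPolynomial (Fin n) ℂ,
      (∀ i j : Fin 2, g ∣ φ h i j) → IsUnit g)
    (hdet : (φ ⟨0, hn⟩).det ≠ 0) :
    (∑ h, higgsIdeal (φ h)) =
      Ideal.span {C (φ ⟨0, hn⟩ 1 0) * X 0 ^ 2 + C (φ ⟨0, hn⟩ 1 1) * X 0 * X 1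
        - C (φ ⟨0, hn⟩ 0 1) * X 1 ^ 2} ∧
    (∑ h, higgsIdeal (φ h)) = higgsIdeal (φ ⟨0, hn⟩) :=
  stmt12_general n hn φ hcomm h11 hφ1 hgcd
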